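/- arXiv:1510.03495 — 8 statements merged into one kernel-verified Lean document; each statement's English description precedes it below -/
import Mathlib

section
/- Let D̄ be any real number with v(r−ρ²) ≤ D̄ ≤ vr, and set α* = −ρ/r + √((1−ρ²/r)(v/D̄ − 1/r)). Then D_P(α*, 0) = D̄, and for every α ∈ ℝ and every s ≥ 0 satisfying the privacy constraint D_P(α, s) ≥ D̄ one has D_C(α, s) ≥ D_C(α*, 0) = (α*)²·D̄. In other words, in the quadratic-Gaussian strategic communication problem the minimum distortion subject to the privacy constraint is achieved with zero added noise (s = 0) at the encoder Y = X + α*θ, and equals (α*)²·D̄. -/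
/-- `Q α = 1 + 2αρ + α²r`, the normalized second moment of `Y = X + αθ` (divided by `v`). -/
noncomputable def Q (ρ r α : ℝ) : ℝ := 1 + 2 * α * ρ + α ^ 2 * r

/-- Distortion `D_C(α, s) = E(X − E[X|Y])²` for `Y = X + αθ + S`, `S ~ N(0, s)`. -/
noncomputable def DC (v ρ r α s : ℝ) : ℝ :=
  v * (1 - (1 + α * ρ) ^ 2 / (Q ρ r α + s / v))

/-- Privacy level `D_P(α, s) = E(θ − E[θ|Y])²` for `Y = X + αθ + S`, `S ~ N(0, s)`. -/
noncomputable def DP (v ρ r α s : ℝ) : ℝ :=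
  v * (r - (ρ + r * α) ^ 2 / (Q ρ r α + s / v))

/-!
With `t = s / v` and `c = r − ρ²`, one has `D_P = v (c + r t) / (Q(α) + t)` and
`D_C = v (α² c + t) / (Q(α) + t)`, so after clearing the common denominator the privacy
constraint and the distortion bound are polynomial inequalities. `α*` is the root of
`Q(α) D̄ = v c` with `ρ + r α* ≥ 0`, and `D_C(α, 0) = α² D_P(α, 0)`. Optimality is a
Lagrange-multiplier certificate: multiplied by `ρ + r α*`, the distortion gap is a nonnegative
combination of the constraint slack, of `t` and of `(α − α*)²`. When `ρ + r α* = 0`, i.e.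
`D̄ = v r`, the multiplier degenerates, but then the constraint alone forces `α = α*`.
-/

section

variable {v ρ r : ℝ}

lemma r_mul_Q (ρ r α : ℝ) : r * Q ρ r α = (ρ + r * α) ^ 2 + (r - ρ ^ 2) := by
  unfold Q; ring

lemma Q_pos (hr : ρ ^ 2 < r) (α : ℝ) : 0 < Q ρ r α := by
  have hr0 : 0 < r := (sq_nonneg ρ).trans_lt hr
  have : 0 < r * Q ρ r α := by rw [r_mul_Q]; nlinarith [sq_nonneg (ρ + r * α)]
  exact pos_of_mul_pos_right this hr0.le

lemma DP_eq {α s : ℝ} (h : Q ρ r α + s / v ≠ 0) :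
    DP v ρ r α s = v * (r - ρ ^ 2 + r * (s / v)) / (Q ρ r α + s / v) := by
  rw [DP, eq_div_iff h]
  field_simp
  unfold Q
  ring

lemma DC_eq {α s : ℝ} (h : Q ρ r α + s / v ≠ 0) :
    DC v ρ r α s = v * (α ^ 2 * (r - ρ ^ 2) + s / v) / (Q ρ r α + s / v) := by
  rw [DC, eq_div_iff h]
  field_simp
  unfold Q
  ring

-- For `Y = X + αθ` the errors satisfy `X − E[X|Y] = −α (θ − E[θ|Y])`.
lemma DC_zero_eq_sq_mul_DP_zero (hr : ρ ^ 2 < r) (α : ℝ) :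
    DC v ρ r α 0 = α ^ 2 * DP v ρ r α 0 := by
  have hQ : Q ρ r α + 0 / v ≠ 0 := by simpa using (Q_pos hr α).ne'
  rw [DC_eq hQ, DP_eq hQ]
  ring

lemma DP_zero_eq_of_Q_mul_eq {β D : ℝ} (hr : ρ ^ 2 < r) (hβ : Q ρ r β * D = v * (r - ρ ^ 2)) :
    DP v ρ r β 0 = D := by
  have hQ := (Q_pos hr β).ne'
  rw [DP_eq (by simpa using hQ), zero_div, add_zero, mul_zero, add_zero, div_eq_iff hQ, ← hβ,
    mul_comm]

lemma lagrange_certificate (ρ r α β t : ℝ) :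
    (ρ + r * β) * (Q ρ r β * (α ^ 2 * (r - ρ ^ 2) + t) - β ^ 2 * (r - ρ ^ 2) * (Q ρ r α + t)) =
      -β * (1 + β * ρ) * (Q ρ r β * (r - ρ ^ 2 + r * t) - (r - ρ ^ 2) * (Q ρ r α + t))
      + (1 + β * ρ) * (ρ + r * β) * Q ρ r β * t + (r - ρ ^ 2) * ρ * (α - β) ^ 2 * Q ρ r β := by
  unfold Q; ring

lemma nonpos_and_one_add_mul_pos {β : ℝ} (hρ : 0 ≤ ρ) (hr : ρ ^ 2 < r) (hβ : 0 ≤ ρ + r * β)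
    (hQβ : Q ρ r β ≤ 1) : β ≤ 0 ∧ 0 < 1 + β * ρ := by
  have hr0 : 0 < r := (sq_nonneg ρ).trans_lt hr
  unfold Q at hQβ
  constructor
  · by_contra! h
    nlinarith [mul_pos (mul_pos h h) hr0, mul_nonneg h.le hρ]
  · nlinarith [mul_nonneg hρ hβ]

lemma sq_mul_le_of_privacy {α β t : ℝ} (hρ : 0 ≤ ρ) (hr : ρ ^ 2 < r) (hβ : 0 ≤ ρ + r * β)
    (hQβ : Q ρ r β ≤ 1) (ht : 0 ≤ t)
    (hG : (r - ρ ^ 2) * (Q ρ r α + t) ≤ Q ρ r β * (r - ρ ^ 2 + r * t)) :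
    β ^ 2 * (r - ρ ^ 2) * (Q ρ r α + t) ≤ Q ρ r β * (α ^ 2 * (r - ρ ^ 2) + t) := by
  have hr0 : 0 < r := (sq_nonneg ρ).trans_lt hr
  have hc : 0 < r - ρ ^ 2 := sub_pos.mpr hr
  obtain ⟨hβ0, hβρ⟩ := nonpos_and_one_add_mul_pos hρ hr hβ hQβ
  rcases hβ.eq_or_lt with hβ | hβ
  · have hrQβ : r * Q ρ r β = r - ρ ^ 2 := by rw [r_mul_Q, ← hβ]; ring
    have hα : α = β := by
      have hrG := mul_le_mul_of_nonneg_left hG hr0.le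
      have : (r - ρ ^ 2) * (ρ + r * α) ^ 2 ≤ 0 := by
        linear_combination hrG - (r - ρ ^ 2) * r_mul_Q ρ r α + (r - ρ ^ 2 + r * t) * hrQβ
      have : ρ + r * α = 0 := pow_eq_zero_iff two_ne_zero |>.mp <|
        le_antisymm (nonpos_of_mul_nonpos_right this hc) (sq_nonneg _)
      exact mul_left_cancel₀ hr0.ne' (by linarith)
    subst hα
    have : r ^ 2 * (Q ρ r α - α ^ 2 * (r - ρ ^ 2)) = (r - ρ ^ 2) ^ 2 := by
      linear_combination r * hrQβ - (r - ρ ^ 2) * (ρ - r * α) * hβ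
    have : 0 ≤ Q ρ r α - α ^ 2 * (r - ρ ^ 2) :=
      nonneg_of_mul_nonneg_right (this ▸ sq_nonneg _) (by positivity)
    linear_combination mul_nonneg ht this
  · have hgap := lagrange_certificate ρ r α β t
    refine sub_nonneg.mp (nonneg_of_mul_nonneg_right (a := ρ + r * β) ?_ hβ)
    rw [hgap]
    have := Q_pos hr β
    have hslack : 0 ≤ -β * (1 + β * ρ) *
        (Q ρ r β * (r - ρ ^ 2 + r * t) - (r - ρ ^ 2) * (Q ρ r α + t)) :=
      mul_nonneg (mul_nonneg (neg_nonneg.mpr hβ0) hβρ.le) (sub_nonneg.mpr hG)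
    exact add_nonneg (add_nonneg hslack (by positivity)) (by positivity)

lemma sq_mul_le_DC_of_le_DP {α β s D : ℝ} (hv : 0 < v) (hρ : 0 ≤ ρ) (hr : ρ ^ 2 < r)
    (hD : v * (r - ρ ^ 2) ≤ D) (hβ : 0 ≤ ρ + r * β) (hQβ : Q ρ r β * D = v * (r - ρ ^ 2))
    (hs : 0 ≤ s) (hDP : D ≤ DP v ρ r α s) : β ^ 2 * D ≤ DC v ρ r α s := by
  have hQβ0 := Q_pos hr β
  have hD0 : 0 < D := lt_of_lt_of_le (mul_pos hv (sub_pos.mpr hr)) hD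
  have hQβ1 : Q ρ r β ≤ 1 := le_of_mul_le_mul_right (by linarith) hD0
  have ht : 0 ≤ s / v := div_nonneg hs hv.le
  have hT : 0 < Q ρ r α + s / v := add_pos_of_pos_of_nonneg (Q_pos hr α) ht
  rw [DP_eq hT.ne', le_div_iff₀ hT] at hDP
  rw [DC_eq hT.ne', le_div_iff₀ hT]
  have hG : (r - ρ ^ 2) * (Q ρ r α + s / v) ≤ Q ρ r β * (r - ρ ^ 2 + r * (s / v)) := by
    refine le_of_mul_le_mul_left ?_ hv
    linear_combination Q ρ r β * hDP - (Q ρ r α + s / v) * hQβ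
  refine le_of_mul_le_mul_left ?_ hQβ0
  linear_combination v * sq_mul_le_of_privacy hρ hr hβ hQβ1 ht hG + β ^ 2 * (Q ρ r α + s / v) * hQβ

noncomputable def alphaStar (v ρ r D : ℝ) : ℝ := -ρ / r + √((1 - ρ ^ 2 / r) * (v / D - 1 / r))

lemma add_mul_alphaStar {D : ℝ} (hr : r ≠ 0) :
    ρ + r * alphaStar v ρ r D = r * √((1 - ρ ^ 2 / r) * (v / D - 1 / r)) := by
  unfold alphaStar; field_simp; ring

lemma Q_alphaStar_mul {D : ℝ} (hv : 0 < v) (hr : ρ ^ 2 < r) (hD1 : v * (r - ρ ^ 2) ≤ D)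
    (hD2 : D ≤ v * r) : Q ρ r (alphaStar v ρ r D) * D = v * (r - ρ ^ 2) := by
  have hr0 : 0 < r := (sq_nonneg ρ).trans_lt hr
  have hD0 : 0 < D := lt_of_lt_of_le (mul_pos hv (sub_pos.mpr hr)) hD1
  have hrad : 0 ≤ (1 - ρ ^ 2 / r) * (v / D - 1 / r) := by
    refine mul_nonneg ?_ ?_
    · rw [sub_nonneg, div_le_one hr0]; exact hr.le
    · rw [sub_nonneg, div_le_div_iff₀ hr0 hD0]; linarith
  have hsq := Real.sq_sqrt hrad
  refine mul_left_cancel₀ hr0.ne' ?_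
  rw [← mul_assoc, r_mul_Q, add_mul_alphaStar hr0.ne', mul_pow, hsq]
  field_simp
  ring

end

/-- The minimum distortion subject to the privacy constraint `D_P ≥ D̄` is achieved with zero
added noise at the encoder `Y = X + α*θ`, with `α* = −ρ/r + √((1−ρ²/r)(v/D̄ − 1/r))`, and the
minimum distortion equals `(α*)² D̄`. -/
theorem simple_equilibrium (v ρ r D : ℝ) (hv : 0 < v) (hρ : 0 ≤ ρ) (hr : ρ ^ 2 < r)
    (hD1 : v * (r - ρ ^ 2) ≤ D) (hD2 : D ≤ v * r) :
    DP v ρ r (-ρ / r + Real.sqrt ((1 - ρ ^ 2 / r) * (v / D - 1 / r))) 0 = D ∧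
    DC v ρ r (-ρ / r + Real.sqrt ((1 - ρ ^ 2 / r) * (v / D - 1 / r))) 0 =
      (-ρ / r + Real.sqrt ((1 - ρ ^ 2 / r) * (v / D - 1 / r))) ^ 2 * D ∧
    ∀ α s : ℝ, 0 ≤ s → DP v ρ r α s ≥ D →
      DC v ρ r α s ≥ DC v ρ r (-ρ / r + Real.sqrt ((1 - ρ ^ 2 / r) * (v / D - 1 / r))) 0 := by
  have hr0 : 0 < r := (sq_nonneg ρ).trans_lt hr
  have hQ := Q_alphaStar_mul hv hr hD1 hD2
  have hDP := DP_zero_eq_of_Q_mul_eq hr hQ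
  have hDC : DC v ρ r (alphaStar v ρ r D) 0 = alphaStar v ρ r D ^ 2 * D := by
    rw [DC_zero_eq_sq_mul_DP_zero hr, hDP]
  refine ⟨hDP, hDC, fun α s hs hα => ?_⟩
  exact hDC.trans_le <| sq_mul_le_DC_of_le_DP hv hρ hr hD1
    (by rw [add_mul_alphaStar hr0.ne']; positivity) hQ hs hα
end

section
/- For every t ≥ 0 and every s ≥ 0, the two symmetric encoder coefficients α⁺ = −ρ/r + t and α⁻ = −ρ/r − t satisfy Q(α⁺) = Q(α⁻) = 1 − ρ²/r + t²r, D_P(α⁺, s) = D_P(α⁻, s), and D_C(α⁺, s) ≤ D_C(α⁻, s). In particular, of the two encoder coefficients achieving a given privacy level, the one closer to zero (i.e., −ρ/r + t) achieves the smaller distortion. -/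
/-- Root selection: for the two symmetric encoder coefficients `−ρ/r ± t`,
both give the same `Q` value `1 − ρ²/r + t²r` and the same privacy level,
while the plus-root achieves the smaller distortion. -/
theorem root_selection (v ρ r : ℝ) (hv : 0 < v) (hρ : 0 ≤ ρ) (hr : ρ ^ 2 < r) :
    ∀ t s : ℝ, 0 ≤ t → 0 ≤ s →
      Q ρ r (-ρ / r + t) = 1 - ρ ^ 2 / r + t ^ 2 * r ∧
      Q ρ r (-ρ / r - t) = 1 - ρ ^ 2 / r + t ^ 2 * r ∧
      DP v ρ r (-ρ / r + t) s = DP v ρ r (-ρ / r - t) s ∧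
      DC v ρ r (-ρ / r + t) s ≤ DC v ρ r (-ρ / r - t) s := by
  intro t s ht hs
  have hr0 : 0 < r := lt_of_le_of_lt (sq_nonneg ρ) hr
  have hne : r ≠ 0 := ne_of_gt hr0
  have hQp : Q ρ r (-ρ / r + t) = 1 - ρ ^ 2 / r + t ^ 2 * r := by
    unfold Q; field_simp; ring
  have hQm : Q ρ r (-ρ / r - t) = 1 - ρ ^ 2 / r + t ^ 2 * r := by
    unfold Q; field_simp; ring
  refine ⟨hQp, hQm, ?_, ?_⟩
  · unfold DP
    rw [hQp, hQm]
    have h1 : (ρ + r * (-ρ / r + t)) ^ 2 = (ρ + r * (-ρ / r - t)) ^ 2 := by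
      field_simp; ring
    rw [h1]
  · unfold DC
    rw [hQp, hQm]
    have ha : 0 ≤ 1 - ρ ^ 2 / r := by
      have := (div_lt_one hr0).mpr hr
      linarith
    have hK : 0 < 1 - ρ ^ 2 / r + t ^ 2 * r + s / v := by
      have h1 : (0:ℝ) < 1 - ρ ^ 2 / r := by
        have := (div_lt_one hr0).mpr hr; linarith
      have h2 : 0 ≤ t ^ 2 * r := mul_nonneg (sq_nonneg t) hr0.le
      have h3 : 0 ≤ s / v := div_nonneg hs hv.le
      linarith
    have hp1 : 1 + (-ρ / r + t) * ρ = 1 - ρ ^ 2 / r + t * ρ := by field_simp; ring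
    have hp2 : 1 + (-ρ / r - t) * ρ = 1 - ρ ^ 2 / r - t * ρ := by field_simp; ring
    rw [hp1, hp2]
    apply mul_le_mul_of_nonneg_left _ hv.le
    apply sub_le_sub_left
    apply div_le_div_of_nonneg_right ?_ hK.le
    nlinarith [mul_nonneg (mul_nonneg ht hρ) ha]
end

section
/- For every α with −ρ/r ≤ α ≤ 0, the noiseless privacy level satisfies v(r − ρ²) ≤ D_P(α, 0) ≤ v·r. Moreover D_C(0, 0) = 0 and D_P(0, 0) = v(r − ρ²) (minimum-privacy endpoint), while D_P(−ρ/r, 0) = v·r (maximum-privacy endpoint). -/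
/-- The feasible privacy range for noiseless encoders with `α ∈ [−ρ/r, 0]`:
`v(r−ρ²) ≤ D_P(α,0) ≤ vr`, with endpoints `D_C(0,0) = 0`, `D_P(0,0) = v(r−ρ²)`
(minimum privacy) and `D_P(−ρ/r, 0) = vr` (maximum privacy). -/
theorem privacy_endpoints (v ρ r : ℝ) (hv : 0 < v) (hρ : 0 ≤ ρ) (hr : ρ ^ 2 < r) :
    (∀ α : ℝ, -ρ / r ≤ α → α ≤ 0 →
      v * (r - ρ ^ 2) ≤ DP v ρ r α 0 ∧ DP v ρ r α 0 ≤ v * r) ∧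
    DC v ρ r 0 0 = 0 ∧
    DP v ρ r 0 0 = v * (r - ρ ^ 2) ∧
    DP v ρ r (-ρ / r) 0 = v * r := by
  have hr0 : 0 < r := lt_of_le_of_lt (sq_nonneg ρ) hr
  refine ⟨?_, ?_, ?_, ?_⟩
  · intro α h1 h2
    have hρrα : 0 ≤ ρ + r * α := by
      have h := (div_le_iff₀ hr0).mp h1
      nlinarith
    have hQpos : 0 < Q ρ r α := by
      unfold Q; nlinarith [sq_nonneg (ρ + r * α)]
    have hQle : Q ρ r α ≤ 1 := by unfold Q; nlinarith
    have key : DP v ρ r α 0 = v * ((r - ρ ^ 2) / Q ρ r α) := by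
      unfold DP
      rw [zero_div, add_zero]
      have h : r - (ρ + r * α) ^ 2 / Q ρ r α = (r - ρ ^ 2) / Q ρ r α := by
        field_simp
        unfold Q; ring
      rw [h]
    constructor
    · rw [key]
      have h3 : r - ρ ^ 2 ≤ (r - ρ ^ 2) / Q ρ r α := by
        rw [le_div_iff₀ hQpos]; nlinarith
      nlinarith
    · unfold DP
      have h0 : 0 ≤ (ρ + r * α) ^ 2 / (Q ρ r α + 0 / v) := by
        rw [zero_div, add_zero]; positivity
      nlinarith [h0]
  · unfold DC Q; norm_num
  · unfold DP Q; norm_num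
  · unfold DP Q
    have hρr : ρ + r * (-ρ / r) = 0 := by field_simp; ring
    rw [hρr]
    norm_num
end

section
/- Let μ be a probability measure on ℝ × ℝ (the joint law of the source X and the private information θ), and let κ₁ and κ₂ be Markov kernels from ℝ × ℝ to ℝ (conditional laws of the transmitter output Y given (X, θ)). For c ∈ [0, 1] let κ_c = c•κ₁ + (1−c)•κ₂ be their pointwise convex combination, and define D_C(κ) = ⨅_{h : ℝ → ℝ measurable} ∫ (x − h(y))² d(μ ⊗ κ)((x, θ), y), the infimum taken over all measurable decoders, with the integral valued in [0, ∞]. Then D_C(κ_c) ≥ c·D_C(κ₁) + (1 − c)·D_C(κ₂); i.e., the distortion D_C is a concave function of the encoder's conditional distribution. -/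
open MeasureTheory ProbabilityTheory
open scoped ENNReal

/-- `D_C(κ)`: the minimum mean squared error in reconstructing the source `x` (first
coordinate) from the transmitter output `y`, over all measurable decoders `h`, when the
source/private-information pair has law `μ` and the encoder is the kernel `κ`. -/
noncomputable def distortionC (μ : Measure (ℝ × ℝ)) (κ : Kernel (ℝ × ℝ) ℝ) : ℝ≥0∞ :=
  ⨅ (h : ℝ → ℝ) (_ : Measurable h),
    ∫⁻ p, ENNReal.ofReal ((p.1.1 - h p.2) ^ 2) ∂(μ ⊗ₘ κ)

/-!
For a fixed decoder `h` the error `∫⁻ (x - h y)² d(μ ⊗ₘ κ)` is affine in `κ`, because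
`μ ⊗ₘ (c•κ₁ + (1-c)•κ₂) = c•(μ ⊗ₘ κ₁) + (1-c)•(μ ⊗ₘ κ₂)`; an infimum of affine functions is concave.
-/

namespace ProbabilityTheory.Kernel

variable {α β : Type*} [MeasurableSpace α] [MeasurableSpace β]

lemma isFiniteKernel_of_apply_eq_smul_add_smul {κ κ₁ κ₂ : Kernel α β}
    [IsFiniteKernel κ₁] [IsFiniteKernel κ₂] {a b : ℝ≥0∞} (ha : a ≠ ∞) (hb : b ≠ ∞)
    (hκ : ∀ x, κ x = a • κ₁ x + b • κ₂ x) : IsFiniteKernel κ := by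
  refine ⟨⟨a * κ₁.bound + b * κ₂.bound, ?_, fun x => ?_⟩⟩
  · exact ENNReal.add_lt_top.2
      ⟨ENNReal.mul_lt_top ha.lt_top κ₁.bound_lt_top, ENNReal.mul_lt_top hb.lt_top κ₂.bound_lt_top⟩
  · rw [hκ, Measure.add_apply, Measure.smul_apply, Measure.smul_apply, smul_eq_mul, smul_eq_mul]
    gcongr <;> exact measure_le_bound _ x _

end ProbabilityTheory.Kernel

namespace MeasureTheory.Measure

variable {α β : Type*} [MeasurableSpace α] [MeasurableSpace β]

lemma compProd_eq_smul_add_smul (μ : Measure α) [SFinite μ]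
    {κ κ₁ κ₂ : Kernel α β} [IsSFiniteKernel κ] [IsSFiniteKernel κ₁] [IsSFiniteKernel κ₂]
    {a b : ℝ≥0∞} (hκ : ∀ x, κ x = a • κ₁ x + b • κ₂ x) :
    μ ⊗ₘ κ = a • (μ ⊗ₘ κ₁) + b • (μ ⊗ₘ κ₂) := by
  ext s hs
  simp only [add_apply, smul_apply, smul_eq_mul, compProd_apply hs, hκ]
  rw [lintegral_add_left ((Kernel.measurable_kernel_prodMk_left hs).const_mul a),
    lintegral_const_mul _ (Kernel.measurable_kernel_prodMk_left hs),
    lintegral_const_mul _ (Kernel.measurable_kernel_prodMk_left hs)]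

end MeasureTheory.Measure

theorem distortionC_concave_general (μ : Measure (ℝ × ℝ)) [IsProbabilityMeasure μ]
    (κ₁ κ₂ κc : Kernel (ℝ × ℝ) ℝ) [IsMarkovKernel κ₁] [IsMarkovKernel κ₂]
    (c : ℝ)
    (hκc : ∀ p : ℝ × ℝ, κc p = ENNReal.ofReal c • κ₁ p + ENNReal.ofReal (1 - c) • κ₂ p) :
    ENNReal.ofReal c * distortionC μ κ₁ + ENNReal.ofReal (1 - c) * distortionC μ κ₂
      ≤ distortionC μ κc := by
  have : IsFiniteKernel κc :=
    Kernel.isFiniteKernel_of_apply_eq_smul_add_smul ENNReal.ofReal_ne_top ENNReal.ofReal_ne_top hκc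
  refine le_iInf₂ fun h hh => ?_
  rw [Measure.compProd_eq_smul_add_smul μ hκc, lintegral_add_measure,
    lintegral_smul_measure, lintegral_smul_measure]
  exact add_le_add (mul_le_mul_right (iInf₂_le h hh) _) (mul_le_mul_right (iInf₂_le h hh) _)

/-- Concavity of the distortion `D_C` in the encoder's conditional distribution: for the
pointwise convex combination `κc = c•κ₁ + (1−c)•κ₂` one has
`D_C(κc) ≥ c·D_C(κ₁) + (1−c)·D_C(κ₂)`. -/
theorem distortionC_concave (μ : Measure (ℝ × ℝ)) [IsProbabilityMeasure μ]
    (κ₁ κ₂ κc : Kernel (ℝ × ℝ) ℝ) [IsMarkovKernel κ₁] [IsMarkovKernel κ₂]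
    (c : ℝ) (hc0 : 0 ≤ c) (hc1 : c ≤ 1)
    (hκc : ∀ p : ℝ × ℝ, κc p = ENNReal.ofReal c • κ₁ p + ENNReal.ofReal (1 - c) • κ₂ p) :
    ENNReal.ofReal c * distortionC μ κ₁ + ENNReal.ofReal (1 - c) * distortionC μ κ₂
      ≤ distortionC μ κc :=
  distortionC_concave_general μ κ₁ κ₂ κc c hκc
end

section
/- Let μ be a probability measure on ℝ × ℝ (the joint law of the source X and the private information θ), and let κ₁ and κ₂ be Markov kernels from ℝ × ℝ to ℝ (conditional laws of the transmitter output Y given (X, θ)). For c ∈ [0, 1] let κ_c = c•κ₁ + (1−c)•κ₂ be their pointwise convex combination, and define D_P(κ) = ⨅_{h : ℝ → ℝ measurable} ∫ (θ − h(y))² d(μ ⊗ κ)((x, θ), y), the infimum taken over all measurable estimators of the private information, with the integral valued in [0, ∞]. Then D_P(κ_c) ≥ c·D_P(κ₁) + (1 − c)·D_P(κ₂); i.e., the privacy level D_P is a concave function of the encoder's conditional distribution. -/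
open MeasureTheory ProbabilityTheory
open scoped ENNReal

/-- `D_P(κ)`: the minimum mean squared error of any measurable estimator of the private
information `θ` (second coordinate) from the transmitter output `y`, when the
source/private-information pair has law `μ` and the encoder is the kernel `κ`. -/
noncomputable def distortionP (μ : Measure (ℝ × ℝ)) (κ : Kernel (ℝ × ℝ) ℝ) : ℝ≥0∞ :=
  ⨅ (h : ℝ → ℝ) (_ : Measurable h),
    ∫⁻ p, ENNReal.ofReal ((p.1.2 - h p.2) ^ 2) ∂(μ ⊗ₘ κ)

/-! The joint law `μ ⊗ κ` depends affinely on the kernel `κ`, and `D_P` is an infimum of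
integrals against that joint law, i.e. of affine functions of `κ`; an infimum of affine
functions is concave. -/

variable {α β : Type*} [MeasurableSpace α] [MeasurableSpace β]

lemma ProbabilityTheory.Kernel.isFiniteKernel_of_apply_eq_smul_add_smul_s10
    {κ κ₁ κ₂ : Kernel α β} [IsFiniteKernel κ₁] [IsFiniteKernel κ₂] {a b : ℝ≥0∞}
    (ha : a ≠ ∞) (hb : b ≠ ∞) (hκ : ∀ x, κ x = a • κ₁ x + b • κ₂ x) :
    IsFiniteKernel κ :=
  ⟨⟨a * κ₁.bound + b * κ₂.bound,
    ENNReal.add_lt_top.2 ⟨ENNReal.mul_lt_top ha.lt_top κ₁.bound_lt_top,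
      ENNReal.mul_lt_top hb.lt_top κ₂.bound_lt_top⟩, fun x => by
    rw [hκ x, Measure.add_apply, Measure.smul_apply, Measure.smul_apply, smul_eq_mul,
      smul_eq_mul]
    gcongr <;> exact measure_le_bound _ _ _⟩⟩

lemma MeasureTheory.Measure.compProd_of_apply_eq_smul_add_smul (μ : Measure α) [SFinite μ]
    {κ κ₁ κ₂ : Kernel α β} [IsSFiniteKernel κ] [IsSFiniteKernel κ₁] [IsSFiniteKernel κ₂]
    {a b : ℝ≥0∞} (hκ : ∀ x, κ x = a • κ₁ x + b • κ₂ x) :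
    μ ⊗ₘ κ = a • (μ ⊗ₘ κ₁) + b • (μ ⊗ₘ κ₂) := by
  ext s hs
  have hm₁ := Kernel.measurable_kernel_prodMk_left (κ := κ₁) hs
  have hm₂ := Kernel.measurable_kernel_prodMk_left (κ := κ₂) hs
  simp only [Measure.add_apply, Measure.smul_apply, smul_eq_mul, Measure.compProd_apply hs, hκ]
  rw [← lintegral_const_mul _ hm₁, ← lintegral_const_mul _ hm₂,
    ← lintegral_add_left (hm₁.const_mul _)]

lemma MeasureTheory.mul_iInf_lintegral_add_mul_iInf_lintegral_le {ι : Sort*} (f : ι → α → ℝ≥0∞)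
    (ν₁ ν₂ : Measure α) (a b : ℝ≥0∞) :
    a * (⨅ i, ∫⁻ x, f i x ∂ν₁) + b * ⨅ i, ∫⁻ x, f i x ∂ν₂
      ≤ ⨅ i, ∫⁻ x, f i x ∂(a • ν₁ + b • ν₂) :=
  le_iInf fun i => by
    rw [lintegral_add_measure, lintegral_smul_measure, lintegral_smul_measure, smul_eq_mul,
      smul_eq_mul]
    gcongr <;> exact iInf_le _ i

theorem distortionP_concave_general (μ : Measure (ℝ × ℝ)) [IsProbabilityMeasure μ]
    (κ₁ κ₂ κc : Kernel (ℝ × ℝ) ℝ) [IsMarkovKernel κ₁] [IsMarkovKernel κ₂]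
    (c : ℝ)
    (hκc : ∀ p : ℝ × ℝ, κc p = ENNReal.ofReal c • κ₁ p + ENNReal.ofReal (1 - c) • κ₂ p) :
    ENNReal.ofReal c * distortionP μ κ₁ + ENNReal.ofReal (1 - c) * distortionP μ κ₂
      ≤ distortionP μ κc := by
  have : IsFiniteKernel κc :=
    Kernel.isFiniteKernel_of_apply_eq_smul_add_smul_s10 ENNReal.ofReal_ne_top
      ENNReal.ofReal_ne_top hκc
  simp only [distortionP, iInf_subtype', Measure.compProd_of_apply_eq_smul_add_smul μ hκc]
  exact mul_iInf_lintegral_add_mul_iInf_lintegral_le _ _ _ _ _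

/-- Concavity of the privacy level `D_P` in the encoder's conditional distribution: for the
pointwise convex combination `κc = c•κ₁ + (1−c)•κ₂` one has
`D_P(κc) ≥ c·D_P(κ₁) + (1−c)·D_P(κ₂)`. -/
theorem distortionP_concave (μ : Measure (ℝ × ℝ)) [IsProbabilityMeasure μ]
    (κ₁ κ₂ κc : Kernel (ℝ × ℝ) ℝ) [IsMarkovKernel κ₁] [IsMarkovKernel κ₂]
    (c : ℝ) (hc0 : 0 ≤ c) (hc1 : c ≤ 1)
    (hκc : ∀ p : ℝ × ℝ, κc p = ENNReal.ofReal c • κ₁ p + ENNReal.ofReal (1 - c) • κ₂ p) :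
    ENNReal.ofReal c * distortionP μ κ₁ + ENNReal.ofReal (1 - c) * distortionP μ κ₂
      ≤ distortionP μ κc :=
  distortionP_concave_general μ κ₁ κ₂ κc c hκc
end

section
/- The optimal distortion–privacy trade-off function T(D̄) = D̄·(−ρ/r + √((1−ρ²/r)(v/D̄ − 1/r)))² is nondecreasing on the interval [v(r−ρ²), v·r], with T(v(r−ρ²)) = 0 and T(v·r) = v·ρ²/r. -/
/-- The optimal distortion–privacy trade-off curve
`T(D̄) = D̄·(−ρ/r + √((1−ρ²/r)(v/D̄ − 1/r)))²` of the paper's Theorem 2. -/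
noncomputable def T (v ρ r D : ℝ) : ℝ :=
  D * (-ρ / r + Real.sqrt ((1 - ρ ^ 2 / r) * (v / D - 1 / r))) ^ 2

/-!
Write `T(D) = D · (ρ/r − √s(D))²` with `s(D) = (1 − ρ²/r)(v/D − 1/r)`. The radicand `s` is
antitone in `D > 0` and equals `(ρ/r)²` at `D = v(r − ρ²)`, so from there on `0 ≤ ρ/r − √s(D)`
grows with `D`; `T` is then a product of two nonnegative nondecreasing factors.
At `D = v·r` the radicand vanishes, which gives the value `vρ²/r`.
-/

open Set

lemma antitoneOn_mul_div_sub {c v k : ℝ} (hc : 0 ≤ c) (hv : 0 ≤ v) :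
    AntitoneOn (fun D => c * (v / D - k)) (Ioi 0) := fun _ hD₁ _ _ h =>
  mul_le_mul_of_nonneg_left (sub_le_sub_right (div_le_div_of_nonneg_left hv hD₁ h) k) hc

lemma T_eq_mul_sq (v ρ r D : ℝ) :
    T v ρ r D = D * (ρ / r - √((1 - ρ ^ 2 / r) * (v / D - 1 / r))) ^ 2 := by
  unfold T
  ring

section

variable {v ρ r : ℝ}

lemma antitoneOn_tradeoff_radicand (hv : 0 ≤ v) (hr : ρ ^ 2 < r) :
    AntitoneOn (fun D => (1 - ρ ^ 2 / r) * (v / D - 1 / r)) (Ioi 0) :=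
  have hr₀ : 0 < r := lt_of_le_of_lt (sq_nonneg ρ) hr
  antitoneOn_mul_div_sub (sub_nonneg.mpr ((div_le_one hr₀).mpr hr.le)) hv

lemma tradeoff_radicand_lower (hv : v ≠ 0) (hr : ρ ^ 2 < r) :
    (1 - ρ ^ 2 / r) * (v / (v * (r - ρ ^ 2)) - 1 / r) = (ρ / r) ^ 2 := by
  have hr₀ : r ≠ 0 := (lt_of_le_of_lt (sq_nonneg ρ) hr).ne'
  have hsub : r - ρ ^ 2 ≠ 0 := (sub_pos.mpr hr).ne'
  field_simp
  ring

lemma tradeoff_radicand_upper (hv : v ≠ 0) :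
    (1 - ρ ^ 2 / r) * (v / (v * r) - 1 / r) = 0 := by
  rw [div_mul_cancel_left₀ hv, one_div, sub_self, mul_zero]

lemma sqrt_tradeoff_radicand_le (hv : 0 < v) (hρ : 0 ≤ ρ) (hr : ρ ^ 2 < r) {D : ℝ}
    (hD : v * (r - ρ ^ 2) ≤ D) : √((1 - ρ ^ 2 / r) * (v / D - 1 / r)) ≤ ρ / r := by
  have hr₀ : 0 < r := lt_of_le_of_lt (sq_nonneg ρ) hr
  have hlow : 0 < v * (r - ρ ^ 2) := mul_pos hv (sub_pos.mpr hr)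
  calc √((1 - ρ ^ 2 / r) * (v / D - 1 / r))
      ≤ √((1 - ρ ^ 2 / r) * (v / (v * (r - ρ ^ 2)) - 1 / r)) :=
        Real.sqrt_le_sqrt (antitoneOn_tradeoff_radicand hv.le hr hlow (hlow.trans_le hD) hD)
    _ = ρ / r := by
        rw [tradeoff_radicand_lower hv.ne' hr, Real.sqrt_sq (div_nonneg hρ hr₀.le)]

lemma monotoneOn_T (hv : 0 < v) (hρ : 0 ≤ ρ) (hr : ρ ^ 2 < r) :
    MonotoneOn (T v ρ r) (Ici (v * (r - ρ ^ 2))) := by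
  have hlow : 0 < v * (r - ρ ^ 2) := mul_pos hv (sub_pos.mpr hr)
  intro D₁ hD₁ D₂ hD₂ h
  have hgap₁ : 0 ≤ ρ / r - √((1 - ρ ^ 2 / r) * (v / D₁ - 1 / r)) :=
    sub_nonneg.mpr (sqrt_tradeoff_radicand_le hv hρ hr hD₁)
  have hgap_le : ρ / r - √((1 - ρ ^ 2 / r) * (v / D₁ - 1 / r))
      ≤ ρ / r - √((1 - ρ ^ 2 / r) * (v / D₂ - 1 / r)) :=
    sub_le_sub_left (Real.sqrt_le_sqrt (antitoneOn_tradeoff_radicand hv.le hr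
      (hlow.trans_le hD₁) (hlow.trans_le hD₂) h)) _
  rw [T_eq_mul_sq, T_eq_mul_sq]
  exact mul_le_mul h (pow_le_pow_left₀ hgap₁ hgap_le 2) (sq_nonneg _) (hlow.trans_le hD₂).le

end

/-- The trade-off function `T` is nondecreasing on `[v(r−ρ²), vr]`, with value `0` at the
minimum-privacy endpoint and `vρ²/r` at the maximum-privacy endpoint. -/
theorem tradeoff_monotone (v ρ r : ℝ) (hv : 0 < v) (hρ : 0 < ρ) (hr : ρ ^ 2 < r) :
    MonotoneOn (fun D => T v ρ r D) (Set.Icc (v * (r - ρ ^ 2)) (v * r)) ∧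
    T v ρ r (v * (r - ρ ^ 2)) = 0 ∧
    T v ρ r (v * r) = v * ρ ^ 2 / r := by
  have hr₀ : 0 < r := lt_of_le_of_lt (sq_nonneg ρ) hr
  refine ⟨(monotoneOn_T hv hρ.le hr).mono Icc_subset_Ici_self, ?_, ?_⟩
  · rw [T_eq_mul_sq, tradeoff_radicand_lower hv.ne' hr,
      Real.sqrt_sq (div_nonneg hρ.le hr₀.le), sub_self, zero_pow two_ne_zero, mul_zero]
  · rw [T_eq_mul_sq, tradeoff_radicand_upper hv.ne', Real.sqrt_zero, sub_zero]
    field_simp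
end

section
/- Let P_T > 0 and σ_Z² ≥ 0, and let D̄ satisfy v·(r·σ_Z² + (r−ρ²)·P_T)/(P_T + σ_Z²) ≤ D̄ ≤ v·r. Define E = (D̄/v)·(1 + σ_Z²/P_T) − r·σ_Z²/P_T. Then r − ρ² ≤ E ≤ r, and the encoder coefficient α* = −ρ/r + √((1−ρ²/r)(1/E − 1/r)) satisfies −ρ/r ≤ α* ≤ 0, Q(α*) = (r−ρ²)/E, and the noisy-channel privacy constraint with equality: v·( r·σ_Z²/(P_T + σ_Z²) + (r−ρ²)·P_T/(Q(α*)·(P_T + σ_Z²)) ) = D̄. -/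
/-- The auxiliary quantity `E = (D̄/v)(1 + σ_Z²/P_T) − r·σ_Z²/P_T` of the noisy-channel
setting. -/
noncomputable def Eaux (v r P σZ2 D : ℝ) : ℝ := (D / v) * (1 + σZ2 / P) - r * σZ2 / P

/-!
The privacy level only sees `α` through `Q(α)`, and equals `v (r σ² + E P)/(P + σ²)` exactly when
`Q(α) = (r − ρ²)/E`; this is how `E` is defined. Since `c ↦ v (r σ² + c P)/(P + σ²)` is increasing,
the admissible range of `D̄` translates into `r − ρ² ≤ E ≤ r`. Completing the square,
`Q(−ρ/r + s) = 1 − ρ²/r + r s²`, so `s = √((1 − ρ²/r)(1/E − 1/r))` gives `Q = (r − ρ²)/E`, and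
`s ≤ ρ/r` amounts to `(r − ρ²)/E ≤ 1 = Q(0)`.
-/

section Eaux

variable {v r P σ D c : ℝ}

theorem Eaux_spec (hv : v ≠ 0) (hP : P ≠ 0) (hPσ : P + σ ≠ 0) :
    v * (r * σ + Eaux v r P σ D * P) / (P + σ) = D := by
  unfold Eaux
  field_simp
  ring

theorem le_Eaux_iff (hv : 0 < v) (hP : 0 < P) (hPσ : 0 < P + σ) :
    c ≤ Eaux v r P σ D ↔ v * (r * σ + c * P) / (P + σ) ≤ D := by
  conv_rhs => rw [← Eaux_spec (r := r) (D := D) hv.ne' hP.ne' hPσ.ne']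
  rw [div_le_div_iff_of_pos_right hPσ, mul_le_mul_iff_right₀ hv, add_le_add_iff_left,
    mul_le_mul_iff_left₀ hP]

theorem Eaux_le_iff (hv : 0 < v) (hP : 0 < P) (hPσ : 0 < P + σ) :
    Eaux v r P σ D ≤ c ↔ D ≤ v * (r * σ + c * P) / (P + σ) := by
  conv_rhs => rw [← Eaux_spec (r := r) (D := D) hv.ne' hP.ne' hPσ.ne']
  rw [div_le_div_iff_of_pos_right hPσ, mul_le_mul_iff_right₀ hv, add_le_add_iff_left,
    mul_le_mul_iff_left₀ hP]

end Eaux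

section Q

variable {ρ r E : ℝ}

theorem Q_neg_div_add (hr : r ≠ 0) (s : ℝ) : Q ρ r (-ρ / r + s) = 1 - ρ ^ 2 / r + r * s ^ 2 := by
  unfold Q
  field_simp
  ring

theorem Q_neg_div_add_sqrt (hr : 0 < r) (hρr : ρ ^ 2 ≤ r) (hE : 0 < E) (hEr : E ≤ r) :
    Q ρ r (-ρ / r + √((1 - ρ ^ 2 / r) * (1 / E - 1 / r))) = (r - ρ ^ 2) / E := by
  have hrad : 0 ≤ (1 - ρ ^ 2 / r) * (1 / E - 1 / r) :=
    mul_nonneg (sub_nonneg.2 ((div_le_one hr).2 hρr))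
      (sub_nonneg.2 (one_div_le_one_div_of_le hE hEr))
  rw [Q_neg_div_add hr.ne', Real.sq_sqrt hrad]
  field_simp
  ring

theorem sqrt_le_div_of_sub_sq_le (hr : 0 < r) (hρ : 0 ≤ ρ) (hE : r - ρ ^ 2 ≤ E)
    (hE0 : 0 < E) : √((1 - ρ ^ 2 / r) * (1 / E - 1 / r)) ≤ ρ / r := by
  rw [Real.sqrt_le_left (by positivity), ← sub_nonneg]
  have hgap : (ρ / r) ^ 2 - (1 - ρ ^ 2 / r) * (1 / E - 1 / r) = (1 - (r - ρ ^ 2) / E) / r := by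
    field_simp
    ring
  rw [hgap]
  exact div_nonneg (sub_nonneg.2 ((div_le_one hE0).2 hE)) hr.le

end Q

/-- Noisy-channel equilibrium (Theorem 4): for an admissible privacy level `D̄`, the quantity
`E` lies in `[r−ρ², r]`, and the encoder coefficient
`α* = −ρ/r + √((1−ρ²/r)(1/E − 1/r))` lies in `[−ρ/r, 0]`, satisfies `Q(α*) = (r−ρ²)/E`, and
meets the noisy-channel privacy constraint with equality. -/
theorem noisy_channel_equilibrium (v ρ r P σZ2 D : ℝ)
    (hv : 0 < v) (hρ : 0 ≤ ρ) (hr : ρ ^ 2 < r)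
    (hP : 0 < P) (hσ : 0 ≤ σZ2)
    (hD1 : v * (r * σZ2 + (r - ρ ^ 2) * P) / (P + σZ2) ≤ D) (hD2 : D ≤ v * r) :
    r - ρ ^ 2 ≤ Eaux v r P σZ2 D ∧ Eaux v r P σZ2 D ≤ r ∧
    -ρ / r ≤ -ρ / r + Real.sqrt ((1 - ρ ^ 2 / r) * (1 / Eaux v r P σZ2 D - 1 / r)) ∧
    -ρ / r + Real.sqrt ((1 - ρ ^ 2 / r) * (1 / Eaux v r P σZ2 D - 1 / r)) ≤ 0 ∧
    Q ρ r (-ρ / r + Real.sqrt ((1 - ρ ^ 2 / r) * (1 / Eaux v r P σZ2 D - 1 / r)))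
      = (r - ρ ^ 2) / Eaux v r P σZ2 D ∧
    v * (r * σZ2 / (P + σZ2) +
          (r - ρ ^ 2) * P /
            (Q ρ r (-ρ / r + Real.sqrt ((1 - ρ ^ 2 / r) * (1 / Eaux v r P σZ2 D - 1 / r))) *
              (P + σZ2))) = D := by
  have hr0 : 0 < r := (sq_nonneg ρ).trans_lt hr
  have hPσ : 0 < P + σZ2 := add_pos_of_pos_of_nonneg hP hσ
  have hE1 : r - ρ ^ 2 ≤ Eaux v r P σZ2 D := (le_Eaux_iff hv hP hPσ).2 hD1
  have hE2 : Eaux v r P σZ2 D ≤ r := by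
    refine (Eaux_le_iff hv hP hPσ).2 (hD2.trans_eq ?_)
    field_simp
    ring
  have hE0 : 0 < Eaux v r P σZ2 D := by linarith
  have hQ := Q_neg_div_add_sqrt hr0 hr.le hE0 hE2
  refine ⟨hE1, hE2, le_add_of_nonneg_right (Real.sqrt_nonneg _), ?_, hQ, ?_⟩
  · rw [neg_div, neg_add_nonpos_iff]
    exact sqrt_le_div_of_sub_sq_le hr0 hρ hE1 hE0
  · have hrρ : r - ρ ^ 2 ≠ 0 := by linarith
    calc _ = v * (r * σZ2 + Eaux v r P σZ2 D * P) / (P + σZ2) := by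
          rw [hQ]
          field_simp
      _ = D := Eaux_spec hv.ne' hP.ne' hPσ.ne'
end

section
/- Let ρ ≠ 0 and r be real numbers. For every α ∈ ℝ, (1 + αρ)² − (1/ρ²)·(ρ + rα)² = α·(ρ − r/ρ)·(2 + α·(ρ + r/ρ)). Consequently, if 0 < ρ, ρ² ≤ r and −ρ/r ≤ α ≤ 0, then (1 + αρ)² − (1/ρ²)·(ρ + rα)² ≥ 0. -/
/-- The key factorization in the proof of the paper's Theorem 2:
`(1+αρ)² − (1/ρ²)(ρ+rα)² = α(ρ − r/ρ)(2 + α(ρ + r/ρ))`, and its nonnegativity for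
`0 < ρ`, `ρ² ≤ r` and `α ∈ [−ρ/r, 0]`. -/
theorem Xi_factorization (ρ r : ℝ) (hρ : ρ ≠ 0) :
    (∀ α : ℝ,
      (1 + α * ρ) ^ 2 - (1 / ρ ^ 2) * (ρ + r * α) ^ 2 =
        α * (ρ - r / ρ) * (2 + α * (ρ + r / ρ))) ∧
    (0 < ρ → ρ ^ 2 ≤ r → ∀ α : ℝ, -ρ / r ≤ α → α ≤ 0 →
      (1 + α * ρ) ^ 2 - (1 / ρ ^ 2) * (ρ + r * α) ^ 2 ≥ 0) := by
  constructor
  · intro α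
    field_simp
    ring
  · intro hρpos hr α hα1 hα2
    have hrpos : (0:ℝ) < r := lt_of_lt_of_le (by positivity) hr
    have hα1' : -ρ ≤ α * r := by
      have := (div_le_iff₀ hrpos).mp hα1
      linarith
    have h1 : 0 ≤ α * (ρ - r / ρ) := by
      have : r / ρ ≥ ρ := (le_div_iff₀ hρpos).mpr (by nlinarith)
      nlinarith
    have h2 : 0 ≤ 2 + α * (ρ + r / ρ) := by
      have hρ2 : ρ ^ 2 / r ≤ 1 := (div_le_one hrpos).mpr hr
      have : α * (ρ + r / ρ) ≥ -ρ / r * (ρ + r / ρ) := by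
        apply mul_le_mul_of_nonneg_right hα1
        positivity
      have heq : -ρ / r * (ρ + r / ρ) = -(ρ ^ 2 / r + 1) := by
        field_simp
      rw [heq] at this
      linarith
    calc (1 + α * ρ) ^ 2 - (1 / ρ ^ 2) * (ρ + r * α) ^ 2
        = α * (ρ - r / ρ) * (2 + α * (ρ + r / ρ)) := by field_simp; ring
      _ ≥ 0 := mul_nonneg h1 h2
end
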